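/- Given an unbounded ladder of triangulated categories (𝒞′, 𝒞, 𝒞″) of period t, the (qt + l)-th left (respectively right, respectively full, respectively opposed) recollement of the ladder is equivalent to the l-th left (respectively right, full, opposed) recollement, for every q ∈ ℤ and l = 0, …, t − 1, and these equivalences are realized by the same triple of equivalences. -/

import Mathlib

/-!
STATEMENT 18: Given an unbounded ladder of triangulated categories (𝒞′, 𝒞, 𝒞″) of period t,
the (qt + l)-th left (respectively right, full, opposed) recollement of the ladder is
equivalent to the l-th left (respectively right, full, opposed) recollement, for every
q ∈ ℤ and l = 0, …, t − 1, and these equivalences are realized by the same triple of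
equivalences.
-/
open CategoryTheory CategoryTheory.Limits CategoryTheory.Pretriangulated

section TriangulatedPreliminaries

universe v v' v'' u u' u''

variable {C : Type u} {C' : Type u'} {C'' : Type u''}
  [Category.{v} C] [Category.{v'} C'] [Category.{v''} C'']
  [HasShift C ℤ] [HasShift C' ℤ] [HasShift C'' ℤ]
  [Preadditive C] [Preadditive C'] [Preadditive C'']
  [HasZeroObject C] [HasZeroObject C'] [HasZeroObject C'']
  [∀ n : ℤ, (shiftFunctor C n).Additive] [∀ n : ℤ, (shiftFunctor C' n).Additive]
  [∀ n : ℤ, (shiftFunctor C'' n).Additive]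
  [Pretriangulated C] [Pretriangulated C'] [Pretriangulated C'']

/-- A functor between pretriangulated categories is a triangle functor if it admits a
commutation structure with the shifts for which it preserves distinguished triangles. -/
def IsTriangleFunctor (F : C ⥤ C') : Prop :=
  ∃ c : F.CommShift ℤ, @Functor.IsTriangulated _ _ _ _ _ _ F c _ _ _ _ _ _ _ _

/-- The kernel of a functor: the class of objects sent to a zero object. -/
def kerSet (F : C ⥤ C') : Set C := { X | IsZero (F.obj X) }

/-- A left recollement `(𝒞', 𝒞, 𝒞'', i^*, i_*, j_!, j^*)`: there are adjoint pairs
`(i^*, i_*)` and `(j_!, j^*)`, the functors `i_*`, `j_!` are fully faithful, `j^* i_* = 0`,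
and every object `X` fits in a distinguished triangle
`j_! j^* X ⟶ X ⟶ i_* i^* X ⟶ (j_! j^* X)[1]` whose morphisms into and out of `X` are the
counit and the unit of the adjunctions. -/
def IsLeftRecollement (iStar : C ⥤ C') (iPush : C' ⥤ C)
    (jShriek : C'' ⥤ C) (jStar : C ⥤ C'') : Prop :=
  ∃ (adjI : iStar ⊣ iPush) (adjJ : jShriek ⊣ jStar),
    iPush.Full ∧ iPush.Faithful ∧ jShriek.Full ∧ jShriek.Faithful ∧
    (∀ X' : C', IsZero (jStar.obj (iPush.obj X'))) ∧
    (∀ X : C, ∃ h : iPush.obj (iStar.obj X) ⟶ (jShriek.obj (jStar.obj X))⟦(1 : ℤ)⟧,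
      Triangle.mk (adjJ.counit.app X) (adjI.unit.app X) h ∈ distTriang C)

/-- A recollement `(𝒞', 𝒞, 𝒞'', i^*, i_*, i^!, j_!, j^*, j_*)`, i.e. the data of
conditions (R1)-(R4): adjoint pairs `(i^*, i_*)`, `(i_*, i^!)`, `(j_!, j^*)`, `(j^*, j_*)`;
`i_*`, `j_!`, `j_*` fully faithful; `j^* i_* = 0`; and the two recollement distinguished
triangles `j_! j^* X ⟶ X ⟶ i_* i^* X ⟶ ⋅[1]` and `i_* i^! X ⟶ X ⟶ j_* j^* X ⟶ ⋅[1]`, whose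
morphisms into and out of `X` are counits and units of the adjunctions. -/
def IsRecollement (iStar : C ⥤ C') (iPush : C' ⥤ C) (iShriek : C ⥤ C')
    (jShriek : C'' ⥤ C) (jStar : C ⥤ C'') (jPush : C'' ⥤ C) : Prop :=
  ∃ (adjI₁ : iStar ⊣ iPush) (adjI₂ : iPush ⊣ iShriek)
    (adjJ₁ : jShriek ⊣ jStar) (adjJ₂ : jStar ⊣ jPush),
    iPush.Full ∧ iPush.Faithful ∧ jShriek.Full ∧ jShriek.Faithful ∧
    jPush.Full ∧ jPush.Faithful ∧
    (∀ X' : C', IsZero (jStar.obj (iPush.obj X'))) ∧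
    (∀ X : C, ∃ h : iPush.obj (iStar.obj X) ⟶ (jShriek.obj (jStar.obj X))⟦(1 : ℤ)⟧,
      Triangle.mk (adjJ₁.counit.app X) (adjI₁.unit.app X) h ∈ distTriang C) ∧
    (∀ X : C, ∃ h : jPush.obj (jStar.obj X) ⟶ (iPush.obj (iShriek.obj X))⟦(1 : ℤ)⟧,
      Triangle.mk (adjI₂.counit.app X) (adjJ₂.unit.app X) h ∈ distTriang C)

/-- An unbounded ladder of triangle functors, encoded by the four families
`a n = i_{2n} : 𝒞' ⥤ 𝒞`, `b n = i_{2n-1} : 𝒞'' ⥤ 𝒞`, `p n = j_{2n-1} : 𝒞 ⥤ 𝒞'` and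
`q n = j_{2n} : 𝒞 ⥤ 𝒞''` (`n ∈ ℤ`): any two consecutive rows form a left or a right
recollement of `𝒞` relative to `𝒞'` and `𝒞''`. -/
structure IsUnboundedLadder (a : ℤ → C' ⥤ C) (b : ℤ → C'' ⥤ C)
    (p : ℤ → C ⥤ C') (q : ℤ → C ⥤ C'') : Prop where
  tri_a : ∀ n, IsTriangleFunctor (a n)
  tri_b : ∀ n, IsTriangleFunctor (b n)
  tri_p : ∀ n, IsTriangleFunctor (p n)
  tri_q : ∀ n, IsTriangleFunctor (q n)
  left : ∀ n : ℤ, IsLeftRecollement (p n) (a n) (b n) (q n)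
  right : ∀ n : ℤ, IsLeftRecollement (q n) (b (n + 1)) (a n) (p (n + 1))

/-- The recollement `(i^*, i_*, i^!, j_!, j^*, j_*)` sits in an unbounded ladder, namely as
the `0`-th recollement `(j_{-1}, i_0, j_1, i_{-1}, j_0, i_1)` of the ladder. -/
def SitsInUnboundedLadder (iStar : C ⥤ C') (iPush : C' ⥤ C) (iShriek : C ⥤ C')
    (jShriek : C'' ⥤ C) (jStar : C ⥤ C'') (jPush : C'' ⥤ C) : Prop :=
  ∃ (a : ℤ → C' ⥤ C) (b : ℤ → C'' ⥤ C) (p : ℤ → C ⥤ C') (q : ℤ → C ⥤ C''),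
    IsUnboundedLadder a b p q ∧
    p 0 = iStar ∧ a 0 = iPush ∧ p 1 = iShriek ∧
    b 0 = jShriek ∧ q 0 = jStar ∧ b 1 = jPush

end TriangulatedPreliminaries
section RecollementEquivalences

variable {C₁ C₁' C₁'' C₂ C₂' C₂'' : Type*}
  [Category C₁] [Category C₁'] [Category C₁''] [Category C₂] [Category C₂'] [Category C₂'']
  [HasShift C₁ ℤ] [HasShift C₁' ℤ] [HasShift C₁'' ℤ]
  [HasShift C₂ ℤ] [HasShift C₂' ℤ] [HasShift C₂'' ℤ]
  [Preadditive C₁] [Preadditive C₁'] [Preadditive C₁'']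
  [Preadditive C₂] [Preadditive C₂'] [Preadditive C₂'']
  [HasZeroObject C₁] [HasZeroObject C₁'] [HasZeroObject C₁'']
  [HasZeroObject C₂] [HasZeroObject C₂'] [HasZeroObject C₂'']
  [∀ n : ℤ, (shiftFunctor C₁ n).Additive] [∀ n : ℤ, (shiftFunctor C₁' n).Additive]
  [∀ n : ℤ, (shiftFunctor C₁'' n).Additive]
  [∀ n : ℤ, (shiftFunctor C₂ n).Additive] [∀ n : ℤ, (shiftFunctor C₂' n).Additive]
  [∀ n : ℤ, (shiftFunctor C₂'' n).Additive]
  [Pretriangulated C₁] [Pretriangulated C₁'] [Pretriangulated C₁'']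
  [Pretriangulated C₂] [Pretriangulated C₂'] [Pretriangulated C₂'']

/-- An equivalence of left recollements: a triple `(F', F, F'')` of triangle-equivalences
commuting with the four functors up to natural isomorphism. -/
def IsLeftRecollementEquiv (F' : C₁' ⥤ C₂') (F : C₁ ⥤ C₂) (F'' : C₁'' ⥤ C₂'')
    (iStar₁ : C₁ ⥤ C₁') (iPush₁ : C₁' ⥤ C₁) (jShriek₁ : C₁'' ⥤ C₁) (jStar₁ : C₁ ⥤ C₁'')
    (iStar₂ : C₂ ⥤ C₂') (iPush₂ : C₂' ⥤ C₂) (jShriek₂ : C₂'' ⥤ C₂) (jStar₂ : C₂ ⥤ C₂'') :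
    Prop :=
  F'.IsEquivalence ∧ F.IsEquivalence ∧ F''.IsEquivalence ∧
  IsTriangleFunctor F' ∧ IsTriangleFunctor F ∧ IsTriangleFunctor F'' ∧
  Nonempty (iStar₁ ⋙ F' ≅ F ⋙ iStar₂) ∧ Nonempty (iPush₁ ⋙ F ≅ F' ⋙ iPush₂) ∧
  Nonempty (jShriek₁ ⋙ F ≅ F'' ⋙ jShriek₂) ∧ Nonempty (jStar₁ ⋙ F'' ≅ F ⋙ jStar₂)

/-- An equivalence of recollements: a triple `(F', F, F'')` of triangle-equivalences
commuting with the six functors up to natural isomorphism. -/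
def IsRecollementEquiv (F' : C₁' ⥤ C₂') (F : C₁ ⥤ C₂) (F'' : C₁'' ⥤ C₂'')
    (iStar₁ : C₁ ⥤ C₁') (iPush₁ : C₁' ⥤ C₁) (iShriek₁ : C₁ ⥤ C₁')
    (jShriek₁ : C₁'' ⥤ C₁) (jStar₁ : C₁ ⥤ C₁'') (jPush₁ : C₁'' ⥤ C₁)
    (iStar₂ : C₂ ⥤ C₂') (iPush₂ : C₂' ⥤ C₂) (iShriek₂ : C₂ ⥤ C₂')
    (jShriek₂ : C₂'' ⥤ C₂) (jStar₂ : C₂ ⥤ C₂'') (jPush₂ : C₂'' ⥤ C₂) : Prop :=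
  F'.IsEquivalence ∧ F.IsEquivalence ∧ F''.IsEquivalence ∧
  IsTriangleFunctor F' ∧ IsTriangleFunctor F ∧ IsTriangleFunctor F'' ∧
  Nonempty (iStar₁ ⋙ F' ≅ F ⋙ iStar₂) ∧ Nonempty (iPush₁ ⋙ F ≅ F' ⋙ iPush₂) ∧
  Nonempty (iShriek₁ ⋙ F' ≅ F ⋙ iShriek₂) ∧
  Nonempty (jShriek₁ ⋙ F ≅ F'' ⋙ jShriek₂) ∧ Nonempty (jStar₁ ⋙ F'' ≅ F ⋙ jStar₂) ∧
  Nonempty (jPush₁ ⋙ F ≅ F'' ⋙ jPush₂)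

end RecollementEquivalences

section LadderPeriod

variable {C C' C'' : Type*}
  [Category C] [Category C'] [Category C'']
  [HasShift C ℤ] [HasShift C' ℤ] [HasShift C'' ℤ]
  [Preadditive C] [Preadditive C'] [Preadditive C'']
  [HasZeroObject C] [HasZeroObject C'] [HasZeroObject C'']
  [∀ n : ℤ, (shiftFunctor C n).Additive] [∀ n : ℤ, (shiftFunctor C' n).Additive]
  [∀ n : ℤ, (shiftFunctor C'' n).Additive]
  [Pretriangulated C] [Pretriangulated C'] [Pretriangulated C'']

/-- In a ladder, the `s`-th left recollement is equivalent to the `t`-th one. -/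
def LadderLeftRecEquivAt (a : ℤ → C' ⥤ C) (b : ℤ → C'' ⥤ C)
    (p : ℤ → C ⥤ C') (q : ℤ → C ⥤ C'') (s t : ℤ) : Prop :=
  ∃ (F' : C' ⥤ C') (F : C ⥤ C) (F'' : C'' ⥤ C''),
    IsLeftRecollementEquiv F' F F'' (p s) (a s) (b s) (q s) (p t) (a t) (b t) (q t)

/-- An unbounded ladder is periodic of period `t`: `t` is the minimal positive integer such
that the `t`-th left recollement is equivalent to the `0`-th one. -/
def LadderHasPeriod (a : ℤ → C' ⥤ C) (b : ℤ → C'' ⥤ C)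
    (p : ℤ → C ⥤ C') (q : ℤ → C ⥤ C'') (t : ℤ) : Prop :=
  0 < t ∧ LadderLeftRecEquivAt a b p q t 0 ∧
    ∀ s : ℤ, 0 < s → s < t → ¬ LadderLeftRecEquivAt a b p q s 0

/-- The recollement `(i^*, i_*, i^!, j_!, j^*, j_*)` sits in an unbounded ladder
of period `t`. -/
def SitsInUnboundedLadderOfPeriod (iStar : C ⥤ C') (iPush : C' ⥤ C) (iShriek : C ⥤ C')
    (jShriek : C'' ⥤ C) (jStar : C ⥤ C'') (jPush : C'' ⥤ C) (t : ℤ) : Prop :=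
  ∃ (a : ℤ → C' ⥤ C) (b : ℤ → C'' ⥤ C) (p : ℤ → C ⥤ C') (q : ℤ → C ⥤ C''),
    IsUnboundedLadder a b p q ∧
    p 0 = iStar ∧ a 0 = iPush ∧ p 1 = iShriek ∧
    b 0 = jShriek ∧ q 0 = jStar ∧ b 1 = jPush ∧
    LadderHasPeriod a b p q t

end LadderPeriod

/-!
Consecutive functors of a ladder are adjoint, `p k ⊣ a k ⊣ p (k + 1)` and
`b k ⊣ q k ⊣ b (k + 1)`, so by uniqueness of adjoints a triple of equivalences that commutes
with one functor of a row up to isomorphism commutes with its neighbours as well. Hence a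
triple identifying the `t`-th left recollement with the `0`-th one identifies the `(t + k)`-th
with the `k`-th for every `k ∈ ℤ`. Composing it `|r|` times with itself, or with its
quasi-inverse (again a triangle functor, being an adjoint of one), gives a single triple
identifying the `(r t + k)`-th left recollement with the `k`-th for all `k` simultaneously;
the cases `k = l` and `k = l + 1` contain the left, right, full and opposed recollements.
-/

namespace CategoryTheory.CatCommSq

variable {C₁ C₂ C₃ C₄ C₅ C₆ : Type*} [Category C₁] [Category C₂] [Category C₃] [Category C₄]
  [Category C₅] [Category C₆]

theorem nonempty_iso_vComp {L₁ : C₁ ⥤ C₂} {L₂ : C₂ ⥤ C₃} {H₁ : C₁ ⥤ C₄} {H₂ : C₂ ⥤ C₅}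
    {H₃ : C₃ ⥤ C₆} {R₁ : C₄ ⥤ C₅} {R₂ : C₅ ⥤ C₆} (h₁ : Nonempty (H₁ ⋙ R₁ ≅ L₁ ⋙ H₂))
    (h₂ : Nonempty (H₂ ⋙ R₂ ≅ L₂ ⋙ H₃)) : Nonempty (H₁ ⋙ R₁ ⋙ R₂ ≅ (L₁ ⋙ L₂) ⋙ H₃) :=
  h₁.map2 (fun e₁ e₂ => (vComp' ⟨e₁⟩ ⟨e₂⟩).iso) h₂

theorem nonempty_iso_vInv {T : C₁ ⥤ C₂} {L : C₁ ⥤ C₃} {R : C₂ ⥤ C₄} {B : C₃ ⥤ C₄}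
    [L.IsEquivalence] [R.IsEquivalence] (h : Nonempty (T ⋙ R ≅ L ⋙ B)) :
    Nonempty (B ⋙ R.inv ≅ L.inv ⋙ T) :=
  h.map fun e => (vInv T L.asEquivalence R.asEquivalence B ⟨e⟩).iso

end CategoryTheory.CatCommSq

namespace CategoryTheory.Adjunction

variable {A₁ A₂ B₁ B₂ : Type*} [Category A₁] [Category A₂] [Category B₁] [Category B₂]
  {L₁ : A₁ ⥤ B₁} {R₁ : B₁ ⥤ A₁} {L₂ : A₂ ⥤ B₂} {R₂ : B₂ ⥤ A₂}

theorem nonempty_leftSquare_iso_iff (adj₁ : L₁ ⊣ R₁) (adj₂ : L₂ ⊣ R₂)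
    (F : A₁ ⥤ A₂) (G : B₁ ⥤ B₂) [F.IsEquivalence] [G.IsEquivalence] :
    Nonempty (L₁ ⋙ G ≅ F ⋙ L₂) ↔ Nonempty (R₁ ⋙ F ≅ G ⋙ R₂) := by
  let adj : F.inv ⋙ L₁ ⋙ G ⊣ G.inv ⋙ R₁ ⋙ F :=
    F.asEquivalence.symm.toAdjunction.comp (adj₁.comp G.asEquivalence.toAdjunction)
  have hL : Nonempty (L₁ ⋙ G ≅ F ⋙ L₂) ↔ Nonempty (F.inv ⋙ L₁ ⋙ G ≅ L₂) :=
    ⟨fun ⟨e⟩ => ⟨Iso.inverseCompIso (G := F.asEquivalence) e⟩,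
      fun ⟨e⟩ => ⟨Iso.isoInverseComp (G := F.asEquivalence.symm) e⟩⟩
  have hR : Nonempty (R₁ ⋙ F ≅ G ⋙ R₂) ↔ Nonempty (R₂ ≅ G.inv ⋙ R₁ ⋙ F) :=
    ⟨fun ⟨e⟩ => ⟨Iso.isoInverseComp (G := G.asEquivalence) e.symm⟩,
      fun ⟨e⟩ => ⟨(Iso.inverseCompIso (G := G.asEquivalence.symm) e).symm⟩⟩
  rw [hL, hR]
  exact (conjugateIsoEquiv adj₂ adj).nonempty_congr

end CategoryTheory.Adjunction

section TriangleFunctors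

variable {C D E : Type*} [Category C] [Category D] [Category E]
  [HasShift C ℤ] [HasShift D ℤ] [HasShift E ℤ]
  [Preadditive C] [Preadditive D] [Preadditive E]
  [HasZeroObject C] [HasZeroObject D] [HasZeroObject E]
  [∀ n : ℤ, (shiftFunctor C n).Additive] [∀ n : ℤ, (shiftFunctor D n).Additive]
  [∀ n : ℤ, (shiftFunctor E n).Additive]
  [Pretriangulated C] [Pretriangulated D] [Pretriangulated E]

theorem isTriangleFunctor_id : IsTriangleFunctor (𝟭 C) := ⟨inferInstance, inferInstance⟩

theorem IsTriangleFunctor.comp {F : C ⥤ D} {G : D ⥤ E} (hF : IsTriangleFunctor F)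
    (hG : IsTriangleFunctor G) : IsTriangleFunctor (F ⋙ G) := by
  obtain ⟨_, _⟩ := hF
  obtain ⟨_, _⟩ := hG
  exact ⟨inferInstance, inferInstance⟩

theorem IsTriangleFunctor.rightAdjoint {F : C ⥤ D} {G : D ⥤ C} (hF : IsTriangleFunctor F)
    (adj : F ⊣ G) : IsTriangleFunctor G := by
  obtain ⟨_, _⟩ := hF
  let _ := adj.rightAdjointCommShift ℤ
  have := adj.commShift_of_leftAdjoint ℤ
  exact ⟨_, adj.isTriangulated_rightAdjoint⟩

end TriangleFunctors

section LeftRecollementEquivalences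

variable {C₁ C₁' C₁'' C₂ C₂' C₂'' C₃ C₃' C₃'' : Type*}
  [Category C₁] [Category C₁'] [Category C₁''] [Category C₂] [Category C₂'] [Category C₂'']
  [Category C₃] [Category C₃'] [Category C₃'']
  [HasShift C₁ ℤ] [HasShift C₁' ℤ] [HasShift C₁'' ℤ] [HasShift C₂ ℤ] [HasShift C₂' ℤ]
  [HasShift C₂'' ℤ] [HasShift C₃ ℤ] [HasShift C₃' ℤ] [HasShift C₃'' ℤ]
  [Preadditive C₁] [Preadditive C₁'] [Preadditive C₁''] [Preadditive C₂] [Preadditive C₂']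
  [Preadditive C₂''] [Preadditive C₃] [Preadditive C₃'] [Preadditive C₃'']
  [HasZeroObject C₁] [HasZeroObject C₁'] [HasZeroObject C₁''] [HasZeroObject C₂]
  [HasZeroObject C₂'] [HasZeroObject C₂''] [HasZeroObject C₃] [HasZeroObject C₃']
  [HasZeroObject C₃'']
  [∀ n : ℤ, (shiftFunctor C₁ n).Additive] [∀ n : ℤ, (shiftFunctor C₁' n).Additive]
  [∀ n : ℤ, (shiftFunctor C₁'' n).Additive] [∀ n : ℤ, (shiftFunctor C₂ n).Additive]
  [∀ n : ℤ, (shiftFunctor C₂' n).Additive] [∀ n : ℤ, (shiftFunctor C₂'' n).Additive]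
  [∀ n : ℤ, (shiftFunctor C₃ n).Additive] [∀ n : ℤ, (shiftFunctor C₃' n).Additive]
  [∀ n : ℤ, (shiftFunctor C₃'' n).Additive]
  [Pretriangulated C₁] [Pretriangulated C₁'] [Pretriangulated C₁'']
  [Pretriangulated C₂] [Pretriangulated C₂'] [Pretriangulated C₂'']
  [Pretriangulated C₃] [Pretriangulated C₃'] [Pretriangulated C₃'']
  {iStar₁ : C₁ ⥤ C₁'} {iPush₁ : C₁' ⥤ C₁} {jShriek₁ : C₁'' ⥤ C₁} {jStar₁ : C₁ ⥤ C₁''}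
  {iStar₂ : C₂ ⥤ C₂'} {iPush₂ : C₂' ⥤ C₂} {jShriek₂ : C₂'' ⥤ C₂} {jStar₂ : C₂ ⥤ C₂''}
  {iStar₃ : C₃ ⥤ C₃'} {iPush₃ : C₃' ⥤ C₃} {jShriek₃ : C₃'' ⥤ C₃} {jStar₃ : C₃ ⥤ C₃''}

theorem IsLeftRecollementEquiv.refl :
    IsLeftRecollementEquiv (𝟭 C₁') (𝟭 C₁) (𝟭 C₁'') iStar₁ iPush₁ jShriek₁ jStar₁
      iStar₁ iPush₁ jShriek₁ jStar₁ :=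
  ⟨inferInstance, inferInstance, inferInstance, isTriangleFunctor_id, isTriangleFunctor_id,
    isTriangleFunctor_id, ⟨Iso.refl _⟩, ⟨Iso.refl _⟩, ⟨Iso.refl _⟩, ⟨Iso.refl _⟩⟩

theorem IsLeftRecollementEquiv.trans {F' : C₁' ⥤ C₂'} {F : C₁ ⥤ C₂} {F'' : C₁'' ⥤ C₂''}
    {G' : C₂' ⥤ C₃'} {G : C₂ ⥤ C₃} {G'' : C₂'' ⥤ C₃''}
    (hF : IsLeftRecollementEquiv F' F F'' iStar₁ iPush₁ jShriek₁ jStar₁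
      iStar₂ iPush₂ jShriek₂ jStar₂)
    (hG : IsLeftRecollementEquiv G' G G'' iStar₂ iPush₂ jShriek₂ jStar₂
      iStar₃ iPush₃ jShriek₃ jStar₃) :
    IsLeftRecollementEquiv (F' ⋙ G') (F ⋙ G) (F'' ⋙ G'') iStar₁ iPush₁ jShriek₁ jStar₁
      iStar₃ iPush₃ jShriek₃ jStar₃ := by
  obtain ⟨_, _, _, hF', hF, hF'', eF₁, eF₂, eF₃, eF₄⟩ := hF
  obtain ⟨_, _, _, hG', hG, hG'', eG₁, eG₂, eG₃, eG₄⟩ := hG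
  exact ⟨inferInstance, inferInstance, inferInstance, hF'.comp hG', hF.comp hG,
    hF''.comp hG'', CatCommSq.nonempty_iso_vComp eF₁ eG₁, CatCommSq.nonempty_iso_vComp eF₂ eG₂,
    CatCommSq.nonempty_iso_vComp eF₃ eG₃, CatCommSq.nonempty_iso_vComp eF₄ eG₄⟩

theorem IsLeftRecollementEquiv.symm {F' : C₁' ⥤ C₂'} {F : C₁ ⥤ C₂} {F'' : C₁'' ⥤ C₂''}
    [F'.IsEquivalence] [F.IsEquivalence] [F''.IsEquivalence]
    (h : IsLeftRecollementEquiv F' F F'' iStar₁ iPush₁ jShriek₁ jStar₁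
      iStar₂ iPush₂ jShriek₂ jStar₂) :
    IsLeftRecollementEquiv F'.inv F.inv F''.inv iStar₂ iPush₂ jShriek₂ jStar₂
      iStar₁ iPush₁ jShriek₁ jStar₁ := by
  obtain ⟨-, -, -, hF', hF, hF'', e₁, e₂, e₃, e₄⟩ := h
  exact ⟨inferInstance, inferInstance, inferInstance,
    hF'.rightAdjoint F'.asEquivalence.toAdjunction, hF.rightAdjoint F.asEquivalence.toAdjunction,
    hF''.rightAdjoint F''.asEquivalence.toAdjunction, CatCommSq.nonempty_iso_vInv e₁,
    CatCommSq.nonempty_iso_vInv e₂, CatCommSq.nonempty_iso_vInv e₃, CatCommSq.nonempty_iso_vInv e₄⟩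

end LeftRecollementEquivalences

section LadderPeriodicity

variable {C C' C'' : Type*}
  [Category C] [Category C'] [Category C'']
  [HasShift C ℤ] [HasShift C' ℤ] [HasShift C'' ℤ]
  [Preadditive C] [Preadditive C'] [Preadditive C'']
  [HasZeroObject C] [HasZeroObject C'] [HasZeroObject C'']
  [∀ n : ℤ, (shiftFunctor C n).Additive] [∀ n : ℤ, (shiftFunctor C' n).Additive]
  [∀ n : ℤ, (shiftFunctor C'' n).Additive]
  [Pretriangulated C] [Pretriangulated C'] [Pretriangulated C'']
  {a : ℤ → C' ⥤ C} {b : ℤ → C'' ⥤ C} {p : ℤ → C ⥤ C'} {q : ℤ → C ⥤ C''}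

def IsLadderLeftRecEquiv (a : ℤ → C' ⥤ C) (b : ℤ → C'' ⥤ C) (p : ℤ → C ⥤ C')
    (q : ℤ → C ⥤ C'') (F' : C' ⥤ C') (F : C ⥤ C) (F'' : C'' ⥤ C'') (m n : ℤ) : Prop :=
  IsLeftRecollementEquiv F' F F'' (p m) (a m) (b m) (q m) (p n) (a n) (b n) (q n)

theorem IsUnboundedLadder.isLadderLeftRecEquiv_succ_iff (h : IsUnboundedLadder a b p q)
    (F' : C' ⥤ C') (F : C ⥤ C) (F'' : C'' ⥤ C'') (m n : ℤ) :
    IsLadderLeftRecEquiv a b p q F' F F'' (m + 1) (n + 1) ↔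
      IsLadderLeftRecEquiv a b p q F' F F'' m n := by
  choose adjPA adjBQ _ using h.left
  choose adjQB adjAP _ using h.right
  refine and_congr_right fun _ => and_congr_right fun _ => and_congr_right fun _ => ?_
  have hP := ((adjAP m).nonempty_leftSquare_iso_iff (adjAP n) F' F).symm.trans
    ((adjPA m).nonempty_leftSquare_iso_iff (adjPA n) F F').symm
  have hA := ((adjPA (m + 1)).nonempty_leftSquare_iso_iff (adjPA (n + 1)) F F').symm.trans
    ((adjAP m).nonempty_leftSquare_iso_iff (adjAP n) F' F).symm
  have hB := ((adjQB m).nonempty_leftSquare_iso_iff (adjQB n) F F'').symm.trans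
    ((adjBQ m).nonempty_leftSquare_iso_iff (adjBQ n) F'' F).symm
  have hQ := ((adjBQ (m + 1)).nonempty_leftSquare_iso_iff (adjBQ (n + 1)) F'' F).symm.trans
    ((adjQB m).nonempty_leftSquare_iso_iff (adjQB n) F F'').symm
  rw [hP, hA, hB, hQ]

theorem IsUnboundedLadder.isLadderLeftRecEquiv_add_iff (h : IsUnboundedLadder a b p q)
    (F' : C' ⥤ C') (F : C ⥤ C) (F'' : C'' ⥤ C'') (m n k : ℤ) :
    IsLadderLeftRecEquiv a b p q F' F F'' (m + k) (n + k) ↔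
      IsLadderLeftRecEquiv a b p q F' F F'' m n := by
  induction k using Int.induction_on with
  | zero => simp only [add_zero]
  | succ k ih => rw [← add_assoc, ← add_assoc, h.isLadderLeftRecEquiv_succ_iff, ih]
  | pred k ih =>
    rw [← ih, ← h.isLadderLeftRecEquiv_succ_iff]
    ring_nf

theorem IsUnboundedLadder.exists_isLadderLeftRecEquiv_mul_add (h : IsUnboundedLadder a b p q)
    {t : ℤ} (ht : LadderLeftRecEquivAt a b p q t 0) (r : ℤ) :
    ∃ (G' : C' ⥤ C') (G : C ⥤ C) (G'' : C'' ⥤ C''),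
      ∀ n, IsLadderLeftRecEquiv a b p q G' G G'' (r * t + n) n := by
  obtain ⟨F', F, F'', hF⟩ := ht
  have hFn (n : ℤ) : IsLadderLeftRecEquiv a b p q F' F F'' (t + n) n := by
    simpa using (h.isLadderLeftRecEquiv_add_iff F' F F'' t 0 n).2 hF
  obtain ⟨_, _, _, -⟩ := hF
  induction r using Int.induction_on with
  | zero =>
    refine ⟨𝟭 C', 𝟭 C, 𝟭 C'', fun n => ?_⟩
    rw [zero_mul, zero_add]
    exact IsLeftRecollementEquiv.refl
  | succ r ih =>
    obtain ⟨G', G, G'', hG⟩ := ih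
    refine ⟨F' ⋙ G', F ⋙ G, F'' ⋙ G'', fun n => ?_⟩
    rw [show (r + 1) * t + n = t + (r * t + n) by ring]
    exact (hFn _).trans (hG n)
  | pred r ih =>
    obtain ⟨G', G, G'', hG⟩ := ih
    refine ⟨F'.inv ⋙ G', F.inv ⋙ G, F''.inv ⋙ G'', fun n => ?_⟩
    have hF := (hFn ((-r - 1) * t + n)).symm
    rw [show t + ((-r - 1) * t + n) = -r * t + n by ring] at hF
    exact hF.trans (hG n)

end LadderPeriodicity

section Statement

universe v v' v'' u u' u''

variable {C : Type u} {C' : Type u'} {C'' : Type u''}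
  [Category.{v} C] [Category.{v'} C'] [Category.{v''} C'']
  [HasShift C ℤ] [HasShift C' ℤ] [HasShift C'' ℤ]
  [Preadditive C] [Preadditive C'] [Preadditive C'']
  [HasZeroObject C] [HasZeroObject C'] [HasZeroObject C'']
  [∀ n : ℤ, (shiftFunctor C n).Additive] [∀ n : ℤ, (shiftFunctor C' n).Additive]
  [∀ n : ℤ, (shiftFunctor C'' n).Additive]
  [Pretriangulated C] [Pretriangulated C'] [Pretriangulated C'']

theorem ladder_period_recollement_equiv_general
    (a : ℤ → C' ⥤ C) (b : ℤ → C'' ⥤ C) (p : ℤ → C ⥤ C') (q : ℤ → C ⥤ C'')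
    (hladder : IsUnboundedLadder a b p q) (t : ℤ) (hper : LadderHasPeriod a b p q t)
    (r l : ℤ) :
    ∃ (F' : C' ⥤ C') (F : C ⥤ C) (F'' : C'' ⥤ C''),
      IsLeftRecollementEquiv F' F F''
        (p (r * t + l)) (a (r * t + l)) (b (r * t + l)) (q (r * t + l))
        (p l) (a l) (b l) (q l) ∧
      IsLeftRecollementEquiv F'' F F'
        (q (r * t + l)) (b (r * t + l + 1)) (a (r * t + l)) (p (r * t + l + 1))
        (q l) (b (l + 1)) (a l) (p (l + 1)) ∧
      IsRecollementEquiv F' F F''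
        (p (r * t + l)) (a (r * t + l)) (p (r * t + l + 1))
        (b (r * t + l)) (q (r * t + l)) (b (r * t + l + 1))
        (p l) (a l) (p (l + 1)) (b l) (q l) (b (l + 1)) ∧
      IsRecollementEquiv F'' F F'
        (q (r * t + l)) (b (r * t + l + 1)) (q (r * t + l + 1))
        (a (r * t + l)) (p (r * t + l + 1)) (a (r * t + l + 1))
        (q l) (b (l + 1)) (q (l + 1)) (a l) (p (l + 1)) (a (l + 1)) := by
  obtain ⟨G', G, G'', hG⟩ := hladder.exists_isLadderLeftRecEquiv_mul_add hper.2.1 r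
  obtain ⟨hE', hE, hE'', hT', hT, hT'', hp, ha, hb, hq⟩ := hG l
  obtain ⟨-, -, -, -, -, -, hp₁, ha₁, hb₁, hq₁⟩ := hG (l + 1)
  rw [← add_assoc] at hp₁ ha₁ hb₁ hq₁
  exact ⟨G', G, G'', ⟨hE', hE, hE'', hT', hT, hT'', hp, ha, hb, hq⟩,
    ⟨hE'', hE, hE', hT'', hT, hT', hq, hb₁, ha, hp₁⟩,
    ⟨hE', hE, hE'', hT', hT, hT'', hp, ha, hp₁, hb, hq, hb₁⟩,
    ⟨hE'', hE, hE', hT'', hT, hT', hq, hb₁, hq₁, ha, hp₁, ha₁⟩⟩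

/-- **Lemma 1.3 (2).** In an unbounded ladder of period `t`, the `(r t + l)`-th left
(resp. right, full, opposed) recollement is equivalent to the `l`-th left (resp. right,
full, opposed) recollement, for all `r ∈ ℤ` and `l = 0, …, t - 1`, under the same triple
of equivalences. -/
theorem ladder_period_recollement_equiv
    (a : ℤ → C' ⥤ C) (b : ℤ → C'' ⥤ C) (p : ℤ → C ⥤ C') (q : ℤ → C ⥤ C'')
    (hladder : IsUnboundedLadder a b p q) (t : ℤ) (hper : LadderHasPeriod a b p q t)
    (r l : ℤ) (hl0 : 0 ≤ l) (hlt : l < t) :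
    ∃ (F' : C' ⥤ C') (F : C ⥤ C) (F'' : C'' ⥤ C''),
      IsLeftRecollementEquiv F' F F''
        (p (r * t + l)) (a (r * t + l)) (b (r * t + l)) (q (r * t + l))
        (p l) (a l) (b l) (q l) ∧
      IsLeftRecollementEquiv F'' F F'
        (q (r * t + l)) (b (r * t + l + 1)) (a (r * t + l)) (p (r * t + l + 1))
        (q l) (b (l + 1)) (a l) (p (l + 1)) ∧
      IsRecollementEquiv F' F F''
        (p (r * t + l)) (a (r * t + l)) (p (r * t + l + 1))
        (b (r * t + l)) (q (r * t + l)) (b (r * t + l + 1))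
        (p l) (a l) (p (l + 1)) (b l) (q l) (b (l + 1)) ∧
      IsRecollementEquiv F'' F F'
        (q (r * t + l)) (b (r * t + l + 1)) (q (r * t + l + 1))
        (a (r * t + l)) (p (r * t + l + 1)) (a (r * t + l + 1))
        (q l) (b (l + 1)) (q (l + 1)) (a l) (p (l + 1)) (a (l + 1)) :=
  ladder_period_recollement_equiv_general a b p q hladder t hper r l

end Statement
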